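/- Conservation of nonholonomic momenta: let d₁,d₂,d₃ : [0,T] → R^3 be a non-twisting orthonormal frame (d_i' = w × d_i with w = d₃ × d₃'), and let π_perp(t) = Π¹(t) d₁(t) + Π²(t) d₂(t) be a tangent vector field along d₃ satisfying the parallel-transport equation (I − d₃⊗d₃) π_perp' = 0. Then Π¹ and Π² are constant. -/

import Mathlib

/-!
By orthonormality `Πⁱ = π_perp ⬝ dᵢ`, whose derivative is `π_perp' ⬝ dᵢ + π_perp ⬝ dᵢ'`.
The transport equation makes `π_perp'` parallel to `d₃`, and for `dᵢ ⊥ d₃` the non-twisting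
condition reads `dᵢ' = (d₃ × d₃') × dᵢ = -(d₃' ⬝ dᵢ) d₃`, also parallel to `d₃`. Since `π_perp`
and `dᵢ` are both orthogonal to `d₃`, both terms vanish.
-/

open Matrix

def cross3 (v w : Fin 3 → ℝ) : Fin 3 → ℝ :=
  ![v 1 * w 2 - v 2 * w 1, v 2 * w 0 - v 0 * w 2, v 0 * w 1 - v 1 * w 0]

theorem cross3_cross3 (a b c : Fin 3 → ℝ) :
    cross3 (cross3 a b) c = (a ⬝ᵥ c) • b - (b ⬝ᵥ c) • a := by
  funext i
  fin_cases i <;> simp [cross3, dotProduct, Fin.sum_univ_three] <;> ring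

theorem cross3_cross3_eq_smul_of_dotProduct_eq_zero {n m e : Fin 3 → ℝ} (h : n ⬝ᵥ e = 0) :
    cross3 (cross3 n m) e = -(m ⬝ᵥ e) • n := by
  rw [cross3_cross3, h, zero_smul, zero_sub, neg_smul]

theorem HasDerivAt.dotProduct {𝕜 ι : Type*} [NontriviallyNormedField 𝕜] [Fintype ι]
    {f g : 𝕜 → ι → 𝕜} {f' g' : ι → 𝕜} {t : 𝕜}
    (hf : HasDerivAt f f' t) (hg : HasDerivAt g g' t) :
    HasDerivAt (fun t => f t ⬝ᵥ g t) (f' ⬝ᵥ g t + f t ⬝ᵥ g') t := by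
  have hsum := HasDerivAt.fun_sum (u := Finset.univ) fun i _ =>
    (hasDerivAt_pi.mp hf i).fun_mul (hasDerivAt_pi.mp hg i)
  rwa [Finset.sum_add_distrib] at hsum

theorem dotProduct_eq_of_deriv_parallel {ι : Type*} [Fintype ι] {f g n : ℝ → ι → ℝ}
    (hf : Differentiable ℝ f) (hg : Differentiable ℝ g)
    (hfn : ∀ t, f t ⬝ᵥ n t = 0) (hgn : ∀ t, g t ⬝ᵥ n t = 0)
    (hf' : ∀ t, ∃ a : ℝ, deriv f t = a • n t) (hg' : ∀ t, ∃ b : ℝ, deriv g t = b • n t)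
    (t s : ℝ) : f t ⬝ᵥ g t = f s ⬝ᵥ g s := by
  have hderiv (t : ℝ) := (hf t).hasDerivAt.dotProduct (hg t).hasDerivAt
  refine is_const_of_deriv_eq_zero (fun t => (hderiv t).differentiableAt) (fun t => ?_) t s
  obtain ⟨a, ha⟩ := hf' t
  obtain ⟨b, hb⟩ := hg' t
  rw [(hderiv t).deriv, ha, hb, smul_dotProduct, dotProduct_smul, dotProduct_comm (n t),
    hgn, hfn, smul_zero, smul_zero, add_zero]

theorem nonholonomic_momenta_conservation_general
    (d₁ d₂ d₃ : ℝ → Fin 3 → ℝ)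
    (hdiff₁ : Differentiable ℝ d₁) (hdiff₂ : Differentiable ℝ d₂)
    (horth : ∀ t, d₁ t ⬝ᵥ d₁ t = 1 ∧ d₂ t ⬝ᵥ d₂ t = 1 ∧ d₃ t ⬝ᵥ d₃ t = 1 ∧
      d₁ t ⬝ᵥ d₂ t = 0 ∧ d₁ t ⬝ᵥ d₃ t = 0 ∧ d₂ t ⬝ᵥ d₃ t = 0)
    (hω : ∀ t, deriv d₁ t = cross3 (cross3 (d₃ t) (deriv d₃ t)) (d₁ t) ∧
      deriv d₂ t = cross3 (cross3 (d₃ t) (deriv d₃ t)) (d₂ t) ∧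
      deriv d₃ t = cross3 (cross3 (d₃ t) (deriv d₃ t)) (d₃ t))
    (P₁ P₂ : ℝ → ℝ) (hP₁ : Differentiable ℝ P₁) (hP₂ : Differentiable ℝ P₂)
    (πperp : ℝ → Fin 3 → ℝ)
    (hπ : ∀ t, πperp t = P₁ t • d₁ t + P₂ t • d₂ t)
    (hpt : ∀ t, deriv πperp t - (deriv πperp t ⬝ᵥ d₃ t) • d₃ t = 0) :
    (∀ t s, P₁ t = P₁ s) ∧ (∀ t s, P₂ t = P₂ s) := by
  have hπdiff : Differentiable ℝ πperp := by
    rw [funext hπ]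
    exact (hP₁.smul hdiff₁).add (hP₂.smul hdiff₂)
  have hπd₃ (t : ℝ) : πperp t ⬝ᵥ d₃ t = 0 := by
    simp [hπ, horth]
  have hπ' (t : ℝ) : ∃ a : ℝ, deriv πperp t = a • d₃ t := ⟨_, sub_eq_zero.mp (hpt t)⟩
  have hπ_dotProduct_const {e : ℝ → Fin 3 → ℝ} (he : Differentiable ℝ e) (hed₃ : ∀ t, e t ⬝ᵥ d₃ t = 0)
      (he' : ∀ t, deriv e t = cross3 (cross3 (d₃ t) (deriv d₃ t)) (e t)) (t s : ℝ) :
      πperp t ⬝ᵥ e t = πperp s ⬝ᵥ e s :=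
    dotProduct_eq_of_deriv_parallel hπdiff he hπd₃ hed₃ hπ' (fun t => ⟨_, (he' t).trans
      (cross3_cross3_eq_smul_of_dotProduct_eq_zero ((dotProduct_comm _ _).trans (hed₃ t)))⟩) t s
  have hP₁_eq (t : ℝ) : P₁ t = πperp t ⬝ᵥ d₁ t := by
    simp [hπ, horth, dotProduct_comm (d₂ t) (d₁ t)]
  have hP₂_eq (t : ℝ) : P₂ t = πperp t ⬝ᵥ d₂ t := by
    simp [hπ, horth]
  refine ⟨fun t s => ?_, fun t s => ?_⟩
  · rw [hP₁_eq, hP₁_eq]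
    exact hπ_dotProduct_const hdiff₁ (fun t => (horth t).2.2.2.2.1) (fun t => (hω t).1) t s
  · rw [hP₂_eq, hP₂_eq]
    exact hπ_dotProduct_const hdiff₂ (fun t => (horth t).2.2.2.2.2) (fun t => (hω t).2.1) t s

theorem nonholonomic_momenta_conservation
    (d₁ d₂ d₃ : ℝ → Fin 3 → ℝ)
    (hdiff₁ : Differentiable ℝ d₁) (hdiff₂ : Differentiable ℝ d₂)
    (hdiff₃ : Differentiable ℝ d₃)
    (horth : ∀ t, d₁ t ⬝ᵥ d₁ t = 1 ∧ d₂ t ⬝ᵥ d₂ t = 1 ∧ d₃ t ⬝ᵥ d₃ t = 1 ∧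
      d₁ t ⬝ᵥ d₂ t = 0 ∧ d₁ t ⬝ᵥ d₃ t = 0 ∧ d₂ t ⬝ᵥ d₃ t = 0)
    (hω : ∀ t, deriv d₁ t = cross3 (cross3 (d₃ t) (deriv d₃ t)) (d₁ t) ∧
      deriv d₂ t = cross3 (cross3 (d₃ t) (deriv d₃ t)) (d₂ t) ∧
      deriv d₃ t = cross3 (cross3 (d₃ t) (deriv d₃ t)) (d₃ t))
    (P₁ P₂ : ℝ → ℝ) (hP₁ : Differentiable ℝ P₁) (hP₂ : Differentiable ℝ P₂)
    (πperp : ℝ → Fin 3 → ℝ)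
    (hπ : ∀ t, πperp t = P₁ t • d₁ t + P₂ t • d₂ t)
    (hpt : ∀ t, deriv πperp t - (deriv πperp t ⬝ᵥ d₃ t) • d₃ t = 0) :
    (∀ t s, P₁ t = P₁ s) ∧ (∀ t s, P₂ t = P₂ s) :=
  nonholonomic_momenta_conservation_general d₁ d₂ d₃ hdiff₁ hdiff₂ horth hω P₁ P₂ hP₁ hP₂ πperp hπ
    hpt
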